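/- For every probability vector p_data on X and every t ≥ 0: D_KL(q_t ‖ π^d) ≤ e^{−t}·D_KL(p_data ‖ π^d) ≤ e^{−t}·d·log S. -/

import Mathlib

open scoped BigOperators

/-- Hamming distance on `[S]^d`. -/
def Ham {S d : ℕ} (x y : Fin d → Fin S) : ℕ :=
  (Finset.univ.filter fun i => x i ≠ y i).card

/-- The forward rate matrix `Q` on `X = [S]^d`. -/
noncomputable def Qmat (S d : ℕ) : Matrix (Fin d → Fin S) (Fin d → Fin S) ℝ :=
  fun x y =>
    if x = y then (1 / (S : ℝ) - 1) * d
    else if Ham x y = 1 then 1 / (S : ℝ) else 0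

/-- The forward marginal `q_t = exp(tQ)·p_data`. -/
noncomputable def qmarg (S d : ℕ) (p : (Fin d → Fin S) → ℝ) (t : ℝ) :
    (Fin d → Fin S) → ℝ :=
  (NormedSpace.exp (t • Qmat S d)).mulVec p

/-- KL divergence between two vectors on `X`, with the convention `0·log 0 = 0`
(in Lean, `Real.log 0 = 0`, so the formula below realizes this convention). -/
noncomputable def KL (S d : ℕ) (p q : (Fin d → Fin S) → ℝ) : ℝ :=
  ∑ x, p x * Real.log (p x / q x)

set_option maxHeartbeats 1000000 in
section


lemma log_aux {a c W D : ℝ} (ha : 0 < a) (hc : 0 < c) (hW : 0 < W) (hD : 0 < D) :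
    a - c * W / D ≤ a * (Real.log a - Real.log c) - a * (Real.log W - Real.log D) := by
  have hx : 0 < c * W / (a * D) := by positivity
  have h1 : Real.log (c * W / (a * D)) ≤ c * W / (a * D) - 1 :=
    Real.log_le_sub_one_of_pos hx
  have h2 : Real.log (c * W / (a * D)) =
      Real.log c + Real.log W - Real.log a - Real.log D := by
    rw [Real.log_div (by positivity) (by positivity), Real.log_mul hc.ne' hW.ne',
      Real.log_mul ha.ne' hD.ne']
    ring
  have h3 : a * (c * W / (a * D)) = c * W / D := by
    field_simp
  nlinarith [mul_le_mul_of_nonneg_left h1 ha.le]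

/-- two-term log-sum inequality -/
lemma logsum2 {a b c e : ℝ} (ha : 0 ≤ a) (hb : 0 ≤ b) (hc : 0 < c) (he : 0 < e) :
    (a + b) * (Real.log (a + b) - Real.log (c + e)) ≤
      a * (Real.log a - Real.log c) + b * (Real.log b - Real.log e) := by
  rcases eq_or_lt_of_le ha with rfl | ha'
  · simp only [zero_add, zero_mul]
    rcases eq_or_lt_of_le hb with rfl | hb'
    · simp
    have := Real.log_le_log he (by linarith : e ≤ c + e)
    nlinarith
  rcases eq_or_lt_of_le hb with rfl | hb'
  · simp only [add_zero, zero_mul]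
    have := Real.log_le_log hc (by linarith : c ≤ c + e)
    nlinarith
  have key1 := log_aux ha' hc (by linarith : (0:ℝ) < a + b) (by linarith : (0:ℝ) < c + e)
  have key2 := log_aux hb' he (by linarith : (0:ℝ) < a + b) (by linarith : (0:ℝ) < c + e)
  have hsum : (a - c * (a + b) / (c + e)) + (b - e * (a + b) / (c + e)) = 0 := by
    field_simp
    ring
  nlinarith


noncomputable def Fent (Y : Type*) [Fintype Y] (v : Y → ℝ) : ℝ :=
  (∑ y, v y * (Real.log (v y) - Real.log (∑ z, v z))) + (∑ z, v z) * Real.log (Fintype.card Y)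

lemma Fent_zero (Y : Type*) [Fintype Y] : Fent Y (fun _ => 0) = 0 := by
  simp [Fent]

lemma Fent_const (Y : Type*) [Fintype Y] [Nonempty Y] (c : ℝ) : Fent Y (fun _ => c) = 0 := by
  rcases eq_or_ne c 0 with rfl | hc
  · simp [Fent]
  have hcard : (Fintype.card Y : ℝ) ≠ 0 := by
    exact_mod_cast Fintype.card_ne_zero
  simp only [Fent, Finset.sum_const, Finset.card_univ, nsmul_eq_mul]
  rw [Real.log_mul hcard hc]
  ring

lemma Fent_unique (Y : Type*) [Fintype Y] [Unique Y] (v : Y → ℝ) : Fent Y v = 0 := by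
  simp [Fent, Fintype.sum_unique, Fintype.card_unique]

lemma Fent_equiv {X Y : Type*} [Fintype X] [Fintype Y] (e : X ≃ Y) (v : Y → ℝ) :
    Fent X (fun x => v (e x)) = Fent Y v := by
  unfold Fent
  rw [Fintype.card_congr e, e.sum_comp (fun y => v y),
    e.sum_comp (fun y => v y * (Real.log (v y) - Real.log (∑ z, v z)))]


lemma Fent_zero' (Y : Type*) [Fintype Y] : Fent Y (fun _ => 0) = 0 := by simp [Fent]

lemma sum_pos_or_zero {Y : Type*} [Fintype Y] {v : Y → ℝ} (hv : ∀ y, 0 ≤ v y) :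
    (∀ y, v y = 0) ∨ 0 < ∑ y, v y := by
  rcases eq_or_lt_of_le (Finset.sum_nonneg (fun y _ => hv y)) with h | h
  · left
    intro y
    have := (Finset.sum_eq_zero_iff_of_nonneg (fun y _ => hv y)).mp h.symm
    exact this y (Finset.mem_univ y)
  · right; exact h

lemma Fent_add_le {Y : Type*} [Fintype Y] {v w : Y → ℝ}
    (hv : ∀ y, 0 ≤ v y) (hw : ∀ y, 0 ≤ w y) :
    Fent Y (fun y => v y + w y) ≤ Fent Y v + Fent Y w := by
  rcases sum_pos_or_zero hv with h0 | hvpos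
  · have : v = fun _ => 0 := funext h0
    subst this
    simp [Fent]
  rcases sum_pos_or_zero hw with h0 | hwpos
  · have : w = fun _ => 0 := funext h0
    subst this
    simp [Fent]
  unfold Fent
  have hsum : ∑ z, (v z + w z) = (∑ z, v z) + ∑ z, w z := Finset.sum_add_distrib
  rw [hsum]
  have hpt : ∀ y, (v y + w y) * (Real.log (v y + w y) - Real.log ((∑ z, v z) + ∑ z, w z)) ≤
      v y * (Real.log (v y) - Real.log (∑ z, v z)) +
      w y * (Real.log (w y) - Real.log (∑ z, w z)) :=
    fun y => logsum2 (hv y) (hw y) hvpos hwpos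
  have hle : ∑ y, (v y + w y) * (Real.log (v y + w y) - Real.log ((∑ z, v z) + ∑ z, w z)) ≤
      ∑ y, (v y * (Real.log (v y) - Real.log (∑ z, v z)) +
        w y * (Real.log (w y) - Real.log (∑ z, w z))) :=
    Finset.sum_le_sum (fun y _ => hpt y)
  rw [Finset.sum_add_distrib] at hle
  simp only []
  nlinarith [hle]

lemma Fent_smul {Y : Type*} [Fintype Y] {v : Y → ℝ} (hv : ∀ y, 0 ≤ v y) {c : ℝ} (hc : 0 ≤ c) :
    Fent Y (fun y => c * v y) = c * Fent Y v := by
  rcases eq_or_lt_of_le hc with rfl | hc'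
  · simp [Fent]
  rcases sum_pos_or_zero hv with h0 | hvpos
  · have : v = fun _ => 0 := funext h0
    subst this
    simp [Fent]
  unfold Fent
  have hsum : ∑ z, c * v z = c * ∑ z, v z := by
    rw [← Finset.mul_sum]
  rw [hsum, Real.log_mul hc'.ne' hvpos.ne']
  have hpt : ∀ y, (c * v y) * (Real.log (c * v y) - (Real.log c + Real.log (∑ z, v z))) =
      c * (v y * (Real.log (v y) - Real.log (∑ z, v z))) := by
    intro y
    rcases eq_or_lt_of_le (hv y) with h | h
    · rw [← h]; ring
    · rw [Real.log_mul hc'.ne' h.ne']; ring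
  calc (∑ y, (c * v y) * (Real.log (c * v y) - (Real.log c + Real.log (∑ z, v z)))) +
        c * (∑ z, v z) * Real.log (Fintype.card Y)
      = (∑ y, c * (v y * (Real.log (v y) - Real.log (∑ z, v z)))) +
        c * (∑ z, v z) * Real.log (Fintype.card Y) := by
        rw [Finset.sum_congr rfl (fun y _ => hpt y)]
    _ = c * ((∑ y, v y * (Real.log (v y) - Real.log (∑ z, v z))) +
        (∑ z, v z) * Real.log (Fintype.card Y)) := by
        rw [← Finset.mul_sum]; ring

lemma Fent_sum_le {Y ι : Type*} [Fintype Y] [Fintype ι] (p : ι → Y → ℝ)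
    (hp : ∀ a y, 0 ≤ p a y) :
    Fent Y (fun y => ∑ a, p a y) ≤ ∑ a, Fent Y (p a) := by
  classical
  have key : ∀ s : Finset ι, Fent Y (fun y => ∑ a ∈ s, p a y) ≤ ∑ a ∈ s, Fent Y (p a) := by
    intro s
    induction s using Finset.induction_on with
    | empty => simp [Fent]
    | @insert k s hk ih =>
        have h1 : Fent Y (fun y => p k y + ∑ a ∈ s, p a y) ≤
            Fent Y (p k) + Fent Y (fun y => ∑ a ∈ s, p a y) :=
          Fent_add_le (hp k) (fun y => Finset.sum_nonneg (fun a _ => hp a y))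
        simp only [Finset.sum_insert hk]
        exact h1.trans (by linarith)
  exact key Finset.univ
  


lemma Fent_eq (Y : Type*) [Fintype Y] (v : Y → ℝ) :
    Fent Y v = (∑ y, v y * Real.log (v y)) - (∑ z, v z) * Real.log (∑ z, v z)
      + (∑ z, v z) * Real.log (Fintype.card Y) := by
  simp [Fent, mul_sub, Finset.sum_sub_distrib, ← Finset.sum_mul]

lemma Fent_prod_decomp {Y : Type*} [Fintype Y] [Nonempty Y] (S : ℕ) (hS : 0 < S)
    (q : Fin S × Y → ℝ) :
    Fent (Fin S × Y) q =
      Fent (Fin S) (fun a => ∑ y, q (a, y)) + ∑ a, Fent Y (fun y => q (a, y)) := by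
  have hScast : ((S : ℝ)) ≠ 0 := Nat.cast_ne_zero.mpr hS.ne'
  have hY : ((Fintype.card Y : ℝ)) ≠ 0 := Nat.cast_ne_zero.mpr Fintype.card_ne_zero
  simp only [Fent_eq, Fintype.sum_prod_type, Fintype.card_prod, Fintype.card_fin]
  rw [Nat.cast_mul, Real.log_mul hScast hY]
  simp only [Finset.sum_add_distrib, Finset.sum_sub_distrib, Finset.sum_mul, Finset.mul_sum,
    mul_add]
  ring


noncomputable def Mker (S : ℕ) (l : ℝ) : Matrix (Fin S) (Fin S) ℝ :=
  fun a b => (if a = b then l else 0) + (1 - l) / S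

lemma mulVec_nonneg {Y : Type*} [Fintype Y] {K : Matrix Y Y ℝ} (hK0 : ∀ y z, 0 ≤ K y z)
    {v : Y → ℝ} (hv : ∀ y, 0 ≤ v y) : ∀ y, 0 ≤ K.mulVec v y := by
  intro y
  exact Finset.sum_nonneg (fun z _ => mul_nonneg (hK0 y z) (hv z))

lemma mulVec_mass {Y : Type*} [Fintype Y] {K : Matrix Y Y ℝ} (hKcol : ∀ z, ∑ y, K y z = 1)
    (v : Y → ℝ) : ∑ y, K.mulVec v y = ∑ z, v z := by
  simp only [Matrix.mulVec, dotProduct]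
  rw [Finset.sum_comm]
  refine Finset.sum_congr rfl (fun z _ => ?_)
  rw [← Finset.sum_mul, hKcol z, one_mul]

noncomputable def Kker (S d : ℕ) (l : ℝ) : Matrix (Fin d → Fin S) (Fin d → Fin S) ℝ :=
  fun x y => ∏ i, Mker S l (x i) (y i)

noncomputable def Tmat (S d : ℕ) (l : ℝ) (k : Fin d) :
    Matrix (Fin d → Fin S) (Fin d → Fin S) ℝ :=
  fun x y => Mker S l (x k) (y k) * (if ∀ j, j ≠ k → x j = y j then 1 else 0)

noncomputable def MKten {Y : Type*} (S : ℕ) (l : ℝ) (K : Matrix Y Y ℝ) :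
    Matrix (Fin S × Y) (Fin S × Y) ℝ :=
  fun q r => Mker S l q.1 r.1 * K q.2 r.2

theorem step_lemma {Y : Type*} [Fintype Y] [Nonempty Y] {S : ℕ} (hS : 0 < S) {l : ℝ}
    (hl0 : 0 ≤ l) (hl1 : l ≤ 1)
    (K : Matrix Y Y ℝ) (hK0 : ∀ y z, 0 ≤ K y z) (hKcol : ∀ z, ∑ y, K y z = 1)
    (hKF : ∀ v : Y → ℝ, (∀ y, 0 ≤ v y) → Fent Y (K.mulVec v) ≤ l * Fent Y v)
    (p : Fin S × Y → ℝ) (hp : ∀ q, 0 ≤ p q) :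
    Fent (Fin S × Y) ((MKten S l K).mulVec p) ≤ l * Fent (Fin S × Y) p := by
  have hScast : (0:ℝ) < (S : ℝ) := Nat.cast_pos.mpr hS
  have hc0 : 0 ≤ (1 - l) / S := div_nonneg (by linarith) hScast.le
  set pa : Fin S → Y → ℝ := fun a y => p (a, y) with hpa
  set m : Y → ℝ := fun y => ∑ b, p (b, y) with hm
  have hpa0 : ∀ a y, 0 ≤ pa a y := fun a y => hp (a, y)
  have hm0 : ∀ y, 0 ≤ m y := fun y => Finset.sum_nonneg (fun b _ => hp (b, y))
  set g := (MKten S l K).mulVec p with hgdef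
  -- pointwise formula for g
  have hg : ∀ a y, g (a, y) = l * K.mulVec (pa a) y + (1 - l) / S * K.mulVec m y := by
    intro a y
    simp only [hgdef, MKten, Matrix.mulVec, dotProduct, Fintype.sum_prod_type]
    have e1 : ∀ b, ∑ z, Mker S l a b * K y z * p (b, z) =
        (if a = b then l else 0) * (∑ z, K y z * p (b, z))
          + (1 - l) / S * ∑ z, K y z * p (b, z) := by
      intro b
      rw [Finset.mul_sum, Finset.mul_sum, ← Finset.sum_add_distrib]
      refine Finset.sum_congr rfl (fun z _ => ?_)
      simp only [Mker]
      ring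
    rw [Finset.sum_congr rfl (fun b _ => e1 b), Finset.sum_add_distrib]
    congr 1
    · simp only [ite_mul, zero_mul]
      rw [Finset.sum_ite_eq Finset.univ a fun b => l * (∑ z, K y z * p (b, z))]
      simp [Matrix.mulVec, dotProduct, Finset.mul_sum, hpa]
    · rw [← Finset.mul_sum]
      congr 1
      rw [Finset.sum_comm]
      simp only [Matrix.mulVec, dotProduct, hm]
      refine Finset.sum_congr rfl (fun z _ => ?_)
      rw [Finset.mul_sum]
  haveI : Nonempty (Fin S) := Fin.pos_iff_nonempty.mp hS
  have hKpa0 : ∀ a y, 0 ≤ K.mulVec (pa a) y := fun a => mulVec_nonneg hK0 (hpa0 a)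
  have hKm0 : ∀ y, 0 ≤ K.mulVec m y := mulVec_nonneg hK0 hm0
  have h1ml : (0:ℝ) ≤ 1 - l := by linarith
  -- conditional bound
  have hcond : ∀ a, Fent Y (fun y => g (a, y)) ≤
      l * (l * Fent Y (pa a)) + (1 - l) / S * (l * Fent Y m) := by
    intro a
    have hrw : (fun y => g (a, y)) =
        (fun y => (fun y' => l * K.mulVec (pa a) y') y + (fun y' => (1 - l) / S * K.mulVec m y') y) := by
      funext y; exact hg a y
    rw [hrw]
    have h1 := Fent_add_le (Y := Y)
      (v := fun y' => l * K.mulVec (pa a) y') (w := fun y' => (1 - l) / S * K.mulVec m y')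
      (fun y => mul_nonneg hl0 (hKpa0 a y)) (fun y => mul_nonneg hc0 (hKm0 y))
    have h2 : Fent Y (fun y' => l * K.mulVec (pa a) y') = l * Fent Y (K.mulVec (pa a)) :=
      Fent_smul (hKpa0 a) hl0
    have h3 : Fent Y (fun y' => (1 - l) / S * K.mulVec m y') =
        (1 - l) / S * Fent Y (K.mulVec m) := Fent_smul hKm0 hc0
    have h4 := mul_le_mul_of_nonneg_left (hKF (pa a) (hpa0 a)) hl0
    have h5 := mul_le_mul_of_nonneg_left (hKF m hm0) hc0
    linarith
  -- sum the conditional bounds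
  have hsumcond : ∑ a, Fent Y (fun y => g (a, y)) ≤ l * ∑ a, Fent Y (pa a) := by
    have h6 : ∑ a : Fin S, (l * (l * Fent Y (pa a)) + (1 - l) / S * (l * Fent Y m)) =
        l * l * (∑ a, Fent Y (pa a)) + (1 - l) * (l * Fent Y m) := by
      rw [Finset.sum_add_distrib, Finset.sum_const, Finset.card_univ,
        Fintype.card_fin, nsmul_eq_mul]
      simp only [← Finset.mul_sum]
      have : (S : ℝ) * ((1 - l) / S * (l * Fent Y m)) = (1 - l) * (l * Fent Y m) := by
        field_simp
      rw [this]; ring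
    have h7 : Fent Y m ≤ ∑ a, Fent Y (pa a) := Fent_sum_le pa hpa0
    have h8 := Finset.sum_le_sum (fun a (_ : a ∈ Finset.univ) => hcond a)
    rw [h6] at h8
    nlinarith [mul_le_mul_of_nonneg_left h7 (mul_nonneg h1ml hl0)]
  -- marginal bound
  have hrg : (fun a => ∑ y, g (a, y)) =
      fun a => l * (∑ y, pa a y) + (1 - l) / S * (∑ y, m y) := by
    funext a
    simp only [hg]
    rw [Finset.sum_add_distrib, ← Finset.mul_sum, ← Finset.mul_sum,
      mulVec_mass hKcol, mulVec_mass hKcol]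
  have hmarg : Fent (Fin S) (fun a => ∑ y, g (a, y)) ≤
      l * Fent (Fin S) (fun a => ∑ y, pa a y) := by
    rw [hrg]
    have h8 := Fent_add_le (Y := Fin S)
      (v := fun a => l * ∑ y, pa a y) (w := fun _ => (1 - l) / S * ∑ y, m y)
      (fun a => mul_nonneg hl0 (Finset.sum_nonneg (fun y _ => hpa0 a y)))
      (fun _ => mul_nonneg hc0 (Finset.sum_nonneg (fun y _ => hm0 y)))
    have h9 : Fent (Fin S) (fun _ : Fin S => (1 - l) / S * ∑ y, m y) = 0 := Fent_const _ _
    have h10 : Fent (Fin S) (fun a => l * ∑ y, pa a y) =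
        l * Fent (Fin S) (fun a => ∑ y, pa a y) :=
      Fent_smul (fun a => Finset.sum_nonneg (fun y _ => hpa0 a y)) hl0
    have h11 : (fun a => l * ∑ y, pa a y + (1 - l) / S * ∑ y, m y) =
        (fun a => (fun a' => l * ∑ y, pa a' y) a + (fun _ => (1 - l) / S * ∑ y, m y) a) := rfl
    rw [h11]
    linarith
  rw [Fent_prod_decomp S hS g, Fent_prod_decomp S hS p, mul_add]
  have hfin : ∑ a, Fent Y (fun y => p (a, y)) = ∑ a, Fent Y (pa a) := rfl
  have hfin2 : Fent (Fin S) (fun a => ∑ y, p (a, y)) = Fent (Fin S) (fun a => ∑ y, pa a y) := rfl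
  rw [hfin, hfin2]
  linarith


lemma Mker_nonneg {S : ℕ} {l : ℝ} (hl0 : 0 ≤ l) (hl1 : l ≤ 1) (a b : Fin S) :
    0 ≤ Mker S l a b := by
  unfold Mker
  have h1 : (0:ℝ) ≤ (1 - l) / S := div_nonneg (by linarith) (Nat.cast_nonneg S)
  split <;> linarith

lemma Mker_col {S : ℕ} (hS : 0 < S) {l : ℝ} (b : Fin S) : ∑ a, Mker S l a b = 1 := by
  unfold Mker
  rw [Finset.sum_add_distrib, Finset.sum_const, Finset.card_univ, Fintype.card_fin,
    nsmul_eq_mul, Finset.sum_ite_eq' Finset.univ b (fun _ => l)]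
  simp only [Finset.mem_univ, if_true]
  have : (S:ℝ) ≠ 0 := Nat.cast_ne_zero.mpr hS.ne'
  field_simp
  ring

lemma Kker_nonneg {S d : ℕ} {l : ℝ} (hl0 : 0 ≤ l) (hl1 : l ≤ 1) (x y : Fin d → Fin S) :
    0 ≤ Kker S d l x y :=
  Finset.prod_nonneg (fun i _ => Mker_nonneg hl0 hl1 _ _)

lemma Kker_col {S d : ℕ} (hS : 0 < S) {l : ℝ} (y : Fin d → Fin S) :
    ∑ x, Kker S d l x y = 1 := by
  unfold Kker
  rw [← Fintype.piFinset_univ,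
    ← Finset.prod_univ_sum (t := fun _ : Fin d => (Finset.univ : Finset (Fin S)))
      (f := fun i c => Mker S l c (y i))]
  exact Finset.prod_eq_one (fun i _ => Mker_col hS (y i))

def eqv (S d : ℕ) : (Fin (d + 1) → Fin S) ≃ (Fin S × (Fin d → Fin S)) where
  toFun f := (f 0, fun i => f i.succ)
  invFun q := Fin.cons q.1 q.2
  left_inv f := Fin.cons_self_tail f
  right_inv q := by
    refine Prod.ext ?_ ?_
    · simp
    · funext i; simp

lemma Kker_succ_mulVec {S d : ℕ} {l : ℝ} (v : (Fin (d + 1) → Fin S) → ℝ) :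
    (Kker S (d + 1) l).mulVec v =
      fun x => ((MKten S l (Kker S d l)).mulVec (fun q => v ((eqv S d).symm q))) (eqv S d x) := by
  funext x
  simp only [Matrix.mulVec, dotProduct]
  rw [← Equiv.sum_comp (eqv S d) (fun q => MKten S l (Kker S d l) (eqv S d x) q *
    v ((eqv S d).symm q))]
  refine Finset.sum_congr rfl (fun y _ => ?_)
  rw [Equiv.symm_apply_apply]
  congr 1
  show Kker S (d+1) l x y = Mker S l (x 0) (y 0) * Kker S d l (fun i => x i.succ) (fun i => y i.succ)
  unfold Kker
  rw [Fin.prod_univ_succ]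

lemma Kker_contract {S : ℕ} (hS : 0 < S) {l : ℝ} (hl0 : 0 ≤ l) (hl1 : l ≤ 1) :
    ∀ d (v : (Fin d → Fin S) → ℝ), (∀ x, 0 ≤ v x) →
      Fent _ ((Kker S d l).mulVec v) ≤ l * Fent _ v := by
  haveI : Nonempty (Fin S) := ⟨⟨0, hS⟩⟩
  intro d
  induction d with
  | zero =>
      intro v hv
      rw [Fent_unique, Fent_unique]
      norm_num
  | succ d ih =>
      intro v hv
      rw [Kker_succ_mulVec v,
        Fent_equiv (eqv S d) ((MKten S l (Kker S d l)).mulVec (fun q => v ((eqv S d).symm q)))]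
      have hstep := step_lemma hS hl0 hl1 (Kker S d l) (Kker_nonneg hl0 hl1) (Kker_col hS)
        (fun w hw => ih w hw) (fun q => v ((eqv S d).symm q)) (fun q => hv _)
      have htr : Fent (Fin S × (Fin d → Fin S)) (fun q => v ((eqv S d).symm q)) = Fent _ v :=
        Fent_equiv (eqv S d).symm v
      rw [htr] at hstep
      exact hstep


variable {n : Type*} [Fintype n] [DecidableEq n]

lemma pow_of_idem {A : Matrix n n ℝ} (hA : A * A = A) : ∀ k, 1 ≤ k → A ^ k = A := by
  intro k hk
  induction k with
  | zero => omega
  | succ k ih =>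
      rcases Nat.eq_or_lt_of_le hk with h | h
      · simp [← h]
      · rw [pow_succ, ih (by omega), hA]

lemma exp_smul_idem {A : Matrix n n ℝ} (hA : A * A = A) (t : ℝ) :
    NormedSpace.exp (t • A) = 1 + (Real.exp t - 1) • A := by
  rw [NormedSpace.exp_eq_tsum ℝ]
  show (∑' k : ℕ, ((k.factorial : ℝ))⁻¹ • (t • A) ^ k) = 1 + (Real.exp t - 1) • A
  have hterm : (fun k : ℕ => ((k.factorial : ℝ))⁻¹ • (t • A) ^ k) =
      fun k => (if k = 0 then (1 : Matrix n n ℝ) else 0) +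
        (if k = 0 then (0:ℝ) else t ^ k / k.factorial) • A := by
    funext k
    rcases Nat.eq_zero_or_pos k with rfl | hk
    · simp
    · rw [if_neg hk.ne', if_neg hk.ne', smul_pow, pow_of_idem hA k hk, zero_add,
        smul_smul]
      congr 1
      rw [div_eq_mul_inv, mul_comm]
  rw [hterm]
  have hsum1 : Summable (fun k : ℕ => (if k = 0 then (1 : Matrix n n ℝ) else 0)) :=
    summable_of_ne_finset_zero (s := {0}) (by intro b hb; simp at hb; simp [hb])
  have hsc : Summable (fun k : ℕ => (if k = 0 then (0:ℝ) else t ^ k / k.factorial)) := by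
    have h1 : Summable (fun k : ℕ => t ^ k / k.factorial) := Real.summable_pow_div_factorial t
    have h2 : Summable (fun k : ℕ => (if k = 0 then (t ^ k / k.factorial : ℝ) else 0)) :=
      summable_of_ne_finset_zero (s := {0}) (by intro b hb; simp at hb; simp [hb])
    have := h1.sub h2
    refine this.congr (fun k => ?_)
    rcases Nat.eq_zero_or_pos k with rfl | hk
    · simp
    · simp [hk.ne']
  have hsum2 : Summable (fun k : ℕ => (if k = 0 then (0:ℝ) else t ^ k / k.factorial) • A) :=
    hsc.smul_const A
  rw [Summable.tsum_add hsum1 hsum2, Summable.tsum_smul_const hsc A]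
  congr 1
  · rw [tsum_eq_sum (s := {0}) (by intro b hb; simp at hb; simp [hb])]
    simp
  · congr 1
    have hexp : Real.exp t = ∑' k : ℕ, t ^ k / k.factorial := by
      rw [Real.exp_eq_exp_ℝ, NormedSpace.exp_eq_tsum_div]
    have h2 : (∑' k : ℕ, (if k = 0 then (t ^ k / k.factorial : ℝ) else 0)) = 1 := by
      rw [tsum_eq_sum (s := {0}) (by intro b hb; simp at hb; simp [hb])]
      simp
    have h1 : Summable (fun k : ℕ => t ^ k / k.factorial) := Real.summable_pow_div_factorial t
    have h2' : Summable (fun k : ℕ => (if k = 0 then (t ^ k / k.factorial : ℝ) else 0)) :=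
      summable_of_ne_finset_zero (s := {0}) (by intro b hb; simp at hb; simp [hb])
    have hsplit : (fun k : ℕ => (if k = 0 then (0:ℝ) else t ^ k / k.factorial)) =
        fun k => t ^ k / k.factorial - (if k = 0 then (t ^ k / k.factorial : ℝ) else 0) := by
      funext k
      rcases Nat.eq_zero_or_pos k with rfl | hk
      · simp
      · simp [hk.ne']
    rw [hsplit, Summable.tsum_sub h1 h2', h2, ← hexp]


noncomputable def Amat (S d : ℕ) (i : Fin d) : Matrix (Fin d → Fin S) (Fin d → Fin S) ℝ :=
  fun x y => if ∀ j, j ≠ i → x j = y j then (S : ℝ)⁻¹ else 0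

section Helpers
variable {S d : ℕ}

lemma update_inj (x : Fin d → Fin S) (k : Fin d) :
    Function.Injective (fun c : Fin S => Function.update x k c) := by
  intro a b h
  have := congrFun h k
  simpa using this

lemma sum_update (x : Fin d → Fin S) (k : Fin d) (f : (Fin d → Fin S) → ℝ)
    (hf : ∀ z, ¬(∀ j, j ≠ k → x j = z j) → f z = 0) :
    ∑ z, f z = ∑ c, f (Function.update x k c) := by
  classical
  have h1 : ∑ z ∈ Finset.univ.image (fun c : Fin S => Function.update x k c), f z
      = ∑ c, f (Function.update x k c) :=
    Finset.sum_image (fun a _ b _ h => update_inj x k h)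
  rw [← h1]
  symm
  apply Finset.sum_subset (Finset.subset_univ _)
  intro z _ hz
  apply hf
  intro hcond
  apply hz
  rw [Finset.mem_image]
  refine ⟨z k, Finset.mem_univ _, ?_⟩
  funext j
  by_cases hj : j = k
  · subst hj; simp
  · rw [Function.update_of_ne hj]
    exact hcond j hj

lemma Amat_mul_apply (i : Fin d) (M : Matrix (Fin d → Fin S) (Fin d → Fin S) ℝ)
    (x y : Fin d → Fin S) :
    (Amat S d i * M) x y = (S : ℝ)⁻¹ * ∑ c, M (Function.update x i c) y := by
  rw [Matrix.mul_apply,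
    sum_update x i (fun z => Amat S d i x z * M z y)
      (fun z hz => by
        show Amat S d i x z * M z y = 0
        unfold Amat; rw [if_neg hz, zero_mul]),
    Finset.mul_sum]
  refine Finset.sum_congr rfl (fun c _ => ?_)
  congr 1
  unfold Amat
  rw [if_pos (fun j hj => by rw [Function.update_of_ne hj])]

lemma Amat_idem (hS : 0 < S) (i : Fin d) : Amat S d i * Amat S d i = Amat S d i := by
  ext x y
  rw [Amat_mul_apply]
  have h1 : ∀ c, Amat S d i (Function.update x i c) y = Amat S d i x y := by
    intro c
    unfold Amat
    refine if_congr ?_ rfl rfl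
    constructor
    · intro h j hj
      rw [← h j hj, Function.update_of_ne hj]
    · intro h j hj
      rw [Function.update_of_ne hj]
      exact h j hj
  rw [Finset.sum_congr rfl (fun c _ => h1 c), Finset.sum_const, Finset.card_univ,
    Fintype.card_fin, nsmul_eq_mul]
  rw [← mul_assoc, inv_mul_cancel₀ (Nat.cast_ne_zero.mpr hS.ne'), one_mul]

lemma Amat_mul_of_ne (hS : 0 < S) {i j : Fin d} (hij : i ≠ j) (x y : Fin d → Fin S) :
    (Amat S d i * Amat S d j) x y =
      if ∀ m, m ≠ i → m ≠ j → x m = y m then (S : ℝ)⁻¹ * (S : ℝ)⁻¹ else 0 := by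
  rw [Amat_mul_apply]
  have h1 : ∀ c, Amat S d j (Function.update x i c) y =
      if c = y i then (if ∀ m, m ≠ i → m ≠ j → x m = y m then (S : ℝ)⁻¹ else 0) else 0 := by
    intro c
    unfold Amat
    rcases eq_or_ne c (y i) with rfl | hc
    · rw [if_pos rfl]
      refine if_congr ?_ rfl rfl
      constructor
      · intro h m hmi hmj
        rw [← h m hmj, Function.update_of_ne hmi]
      · intro h m hmj
        by_cases hmi : m = i
        · subst hmi; simp
        · rw [Function.update_of_ne hmi]; exact h m hmi hmj
    · rw [if_neg hc, if_neg]
      intro h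
      apply hc
      have := h i hij
      rwa [Function.update_self] at this
  rw [Finset.sum_congr rfl (fun c _ => h1 c), Finset.sum_ite_eq' Finset.univ (y i)]
  simp only [Finset.mem_univ, if_true]
  split
  · ring
  · ring

lemma Amat_commute (hS : 0 < S) (i j : Fin d) :
    Commute (Amat S d i) (Amat S d j) := by
  rcases eq_or_ne i j with rfl | hij
  · exact Commute.refl _
  · unfold Commute SemiconjBy
    ext x y
    rw [Amat_mul_of_ne hS hij, Amat_mul_of_ne hS hij.symm]
    refine if_congr ?_ rfl rfl
    constructor
    · intro h m h1 h2; exact h m h2 h1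
    · intro h m h1 h2; exact h m h2 h1

end Helpers

section Decomp
variable {S d : ℕ}

lemma Qmat_eq_sum (hS : 0 < S) :
    Qmat S d = ∑ i, (Amat S d i - 1) := by
  ext x y
  rw [Matrix.sum_apply]
  simp only [Matrix.sub_apply, Matrix.one_apply]
  rcases eq_or_ne x y with rfl | hxy
  · have h1 : ∀ i : Fin d, Amat S d i x x - (if x = x then (1:ℝ) else 0) = (S:ℝ)⁻¹ - 1 := by
      intro i
      rw [if_pos rfl]
      unfold Amat
      rw [if_pos (fun j _ => rfl)]
    rw [Finset.sum_congr rfl (fun i _ => h1 i), Finset.sum_const, Finset.card_univ,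
      Fintype.card_fin, nsmul_eq_mul]
    unfold Qmat
    rw [if_pos rfl, one_div]
    ring
  · rw [Finset.sum_congr rfl (fun i (_ : i ∈ Finset.univ) => by rw [if_neg hxy, sub_zero])]
    unfold Qmat
    rw [if_neg hxy]
    obtain ⟨j0, hj0⟩ := Function.ne_iff.mp hxy
    by_cases hham : Ham x y = 1
    · rw [if_pos hham]
      obtain ⟨i0, hD⟩ := Finset.card_eq_one.mp hham
      have h2 : ∀ i : Fin d, Amat S d i x y = if i0 = i then (S:ℝ)⁻¹ else 0 := by
        intro i
        unfold Amat
        rcases eq_or_ne i0 i with rfl | hi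
        · rw [if_pos rfl, if_pos]
          intro j hj
          by_contra hne
          have : j ∈ (Finset.univ.filter fun m => x m ≠ y m) := by
            simp [hne]
          rw [hD, Finset.mem_singleton] at this
          exact hj this
        · rw [if_neg hi, if_neg]
          intro h
          have hi0mem : i0 ∈ (Finset.univ.filter fun m => x m ≠ y m) := by
            rw [hD]; exact Finset.mem_singleton_self _
          have : x i0 ≠ y i0 := by
            simpa using hi0mem
          exact this (h i0 hi)
      rw [Finset.sum_congr rfl (fun i _ => h2 i), Finset.sum_ite_eq Finset.univ i0]
      simp [one_div]
    · rw [if_neg hham]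
      symm
      refine Finset.sum_eq_zero (fun i _ => ?_)
      unfold Amat
      rw [if_neg]
      intro h
      apply hham
      have hsub : (Finset.univ.filter fun m => x m ≠ y m) ⊆ {i} := by
        intro j hj
        simp only [Finset.mem_filter, Finset.mem_univ, true_and] at hj
        rw [Finset.mem_singleton]
        by_contra hne
        exact hj (h j hne)
      have hmem : j0 ∈ (Finset.univ.filter fun m => x m ≠ y m) := by simp [hj0]
      unfold Ham
      rcases Finset.subset_singleton_iff.mp hsub with h0 | h0
      · rw [h0] at hmem; simp at hmem
      · rw [h0]; simp

end Decomp

section ExpPart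
variable {S d : ℕ}

lemma exp_coord (hS : 0 < S) (t : ℝ) (k : Fin d) :
    NormedSpace.exp (t • (Amat S d k - 1)) = Tmat S d (Real.exp (-t)) k := by
  have hsplit : t • (Amat S d k - 1) = t • Amat S d k + (-t) • (1 : Matrix _ _ ℝ) := by
    rw [smul_sub, sub_eq_add_neg, ← neg_smul]
  have hcomm : Commute (t • Amat S d k) ((-t) • (1 : Matrix (Fin d → Fin S) (Fin d → Fin S) ℝ)) :=
    ((Commute.one_right (Amat S d k)).smul_left t).smul_right (-t)
  rw [hsplit, Matrix.exp_add_of_commute _ _ hcomm, exp_smul_idem (Amat_idem hS k) t,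
    exp_smul_idem (one_mul (1 : Matrix (Fin d → Fin S) (Fin d → Fin S) ℝ)) (-t)]
  have h1 : (1 : Matrix (Fin d → Fin S) (Fin d → Fin S) ℝ) + (Real.exp (-t) - 1) • 1
      = Real.exp (-t) • 1 := by
    rw [sub_smul, one_smul]
    abel
  rw [h1, mul_smul_comm, mul_one, smul_add, smul_smul]
  have h2 : Real.exp (-t) * (Real.exp t - 1) = 1 - Real.exp (-t) := by
    rw [mul_sub, mul_one, ← Real.exp_add]
    norm_num
  rw [h2]
  ext x y
  simp only [Matrix.add_apply, Matrix.smul_apply, Matrix.one_apply, Tmat, Amat, Mker,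
    smul_eq_mul]
  by_cases hcond : ∀ j, j ≠ k → x j = y j
  · rw [if_pos hcond, if_pos hcond, mul_one]
    have hxy : (x = y) ↔ (x k = y k) := by
      constructor
      · intro h; rw [h]
      · intro h; funext j
        by_cases hj : j = k
        · subst hj; exact h
        · exact hcond j hj
    rw [if_congr hxy rfl rfl]
    by_cases hk : x k = y k
    · rw [if_pos hk, if_pos hk, mul_one, div_eq_mul_inv]
    · rw [if_neg hk, if_neg hk, mul_zero, div_eq_mul_inv]
  · rw [if_neg hcond, if_neg hcond, mul_zero, mul_zero]
    have hxy : x ≠ y := by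
      intro h; subst h; exact hcond (fun j _ => rfl)
    rw [if_neg hxy, mul_zero, add_zero]

lemma exp_partial (hS : 0 < S) (t : ℝ) (s : Finset (Fin d)) :
    NormedSpace.exp (t • ∑ i ∈ s, (Amat S d i - 1)) =
      fun x y => (∏ i ∈ s, Mker S (Real.exp (-t)) (x i) (y i)) *
        (if ∀ j, j ∉ s → x j = y j then 1 else 0) := by
  classical
  induction s using Finset.induction_on with
  | empty =>
      rw [Finset.sum_empty, smul_zero, NormedSpace.exp_zero]
      funext x y
      show (1 : Matrix (Fin d → Fin S) (Fin d → Fin S) ℝ) x y = _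
      rw [Matrix.one_apply, Finset.prod_empty, one_mul]
      refine if_congr ?_ rfl rfl
      constructor
      · intro h; subst h; intro j _; rfl
      · intro h; funext j; exact h j (Finset.notMem_empty j)
  | @insert k s hk ih =>
      rw [Finset.sum_insert hk, smul_add]
      have hcommA : Commute (t • (Amat S d k - 1)) (t • ∑ i ∈ s, (Amat S d i - 1)) := by
        refine Commute.smul_left (Commute.smul_right ?_ t) t
        refine Commute.sum_right s _ _ (fun i _ => ?_)
        have h1 : Commute (Amat S d k) (Amat S d i - 1) :=
          (Amat_commute hS k i).sub_right (Commute.one_right _)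
        have h2 : Commute (1 : Matrix (Fin d → Fin S) (Fin d → Fin S) ℝ) (Amat S d i - 1) :=
          (Commute.one_left _).sub_right (Commute.one_left _)
        exact h1.sub_left h2
      rw [Matrix.exp_add_of_commute _ _ hcommA, exp_coord hS t k, ih]
      funext x y
      erw [Matrix.mul_apply]
      set l := Real.exp (-t) with hl
      rw [sum_update x k (fun z => Tmat S d l k x z *
          ((∏ i ∈ s, Mker S l (z i) (y i)) * (if ∀ j, j ∉ s → z j = y j then 1 else 0)))
        (fun z hz => by
          show Tmat S d l k x z * _ = 0
          unfold Tmat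
          rw [if_neg hz, mul_zero, zero_mul])]
      have hterm : ∀ c, Tmat S d l k x (Function.update x k c) *
          ((∏ i ∈ s, Mker S l (Function.update x k c i) (y i)) *
            (if ∀ j, j ∉ s → Function.update x k c j = y j then 1 else 0)) =
          if c = y k then
            Mker S l (x k) c * ((∏ i ∈ s, Mker S l (x i) (y i)) *
              (if ∀ j, j ∉ insert k s → x j = y j then 1 else 0))
          else 0 := by
        intro c
        have ht : Tmat S d l k x (Function.update x k c) = Mker S l (x k) c := by
          unfold Tmat
          rw [if_pos (fun j hj => by rw [Function.update_of_ne hj]), mul_one,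
            Function.update_self]
        have hprod : ∏ i ∈ s, Mker S l (Function.update x k c i) (y i) =
            ∏ i ∈ s, Mker S l (x i) (y i) := by
          refine Finset.prod_congr rfl (fun i hi => ?_)
          rw [Function.update_of_ne (fun h => hk (by rwa [h] at hi))]
        have hiff : (∀ j, j ∉ s → Function.update x k c j = y j) ↔
            (c = y k ∧ ∀ j, j ∉ insert k s → x j = y j) := by
          constructor
          · intro h
            refine ⟨by have := h k hk; rwa [Function.update_self] at this, fun j hj => ?_⟩
            have hjk : j ≠ k := fun he => hj (he ▸ Finset.mem_insert_self k s)
            have hjs : j ∉ s := fun he => hj (Finset.mem_insert_of_mem he)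
            have := h j hjs
            rwa [Function.update_of_ne hjk] at this
          · rintro ⟨hc, h⟩ j hjs
            by_cases hjk : j = k
            · subst hjk; rwa [Function.update_self]
            · rw [Function.update_of_ne hjk]
              exact h j (by
                intro hmem
                rcases Finset.mem_insert.mp hmem with h1 | h1
                · exact hjk h1
                · exact hjs h1)
        rw [ht, hprod, if_congr hiff rfl rfl]
        by_cases hcy : c = y k
        · simp [hcy]
        · simp [hcy]
      refine Eq.trans (Finset.sum_congr rfl (fun c _ => hterm c)) ?_
      rw [Finset.sum_ite_eq' Finset.univ (y k)]
      simp only [Finset.mem_univ, if_true]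
      rw [Finset.prod_insert hk]
      ring



lemma exp_Q {S d : ℕ} (hS : 0 < S) (t : ℝ) :
    NormedSpace.exp (t • Qmat S d) = Kker S d (Real.exp (-t)) := by
  rw [Qmat_eq_sum hS, exp_partial hS t Finset.univ]
  funext x y
  unfold Kker
  rw [if_pos (fun j hj => absurd (Finset.mem_univ j) hj), mul_one]


end ExpPart

section Assemble
variable {S d : ℕ}

lemma card_cast (hS : 0 < S) :
    ((Fintype.card (Fin d → Fin S) : ℝ)) = (S : ℝ) ^ d := by
  rw [Fintype.card_fun]
  push_cast
  simp

lemma KL_eq_Fent (hS : 0 < S) (v : (Fin d → Fin S) → ℝ) (hv0 : ∀ x, 0 ≤ v x)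
    (hv1 : ∑ x, v x = 1) :
    KL S d v (fun _ => ((S : ℝ) ^ d)⁻¹) = Fent (Fin d → Fin S) v := by
  have hSpow : (0:ℝ) < (S:ℝ) ^ d := by positivity
  unfold KL Fent
  rw [hv1, Real.log_one, one_mul, card_cast hS]
  have hpt : ∀ x, v x * Real.log (v x / ((S:ℝ) ^ d)⁻¹) =
      v x * Real.log (v x) + v x * Real.log ((S:ℝ) ^ d) := by
    intro x
    rw [div_inv_eq_mul]
    rcases eq_or_lt_of_le (hv0 x) with h | h
    · rw [← h]; simp
    · rw [Real.log_mul h.ne' hSpow.ne']; ring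
  rw [Finset.sum_congr rfl (fun x _ => hpt x), Finset.sum_add_distrib, ← Finset.sum_mul, hv1,
    one_mul]
  simp

lemma KL_le_bound (hS : 0 < S) (v : (Fin d → Fin S) → ℝ) (hv0 : ∀ x, 0 ≤ v x)
    (hv1 : ∑ x, v x = 1) :
    KL S d v (fun _ => ((S : ℝ) ^ d)⁻¹) ≤ (d : ℝ) * Real.log S := by
  have hSpow : (0:ℝ) < (S:ℝ) ^ d := by positivity
  unfold KL
  have hvle : ∀ x, v x ≤ 1 := by
    intro x
    rw [← hv1]
    exact Finset.single_le_sum (fun y _ => hv0 y) (Finset.mem_univ x)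
  have hpt : ∀ x, v x * Real.log (v x / ((S:ℝ) ^ d)⁻¹) ≤ v x * ((d:ℝ) * Real.log S) := by
    intro x
    rcases eq_or_lt_of_le (hv0 x) with h | h
    · rw [← h]; simp
    · refine mul_le_mul_of_nonneg_left ?_ (hv0 x)
      rw [div_inv_eq_mul, ← Real.log_pow]
      refine Real.log_le_log (by positivity) ?_
      calc v x * (S:ℝ) ^ d ≤ 1 * (S:ℝ) ^ d :=
            mul_le_mul_of_nonneg_right (hvle x) hSpow.le
        _ = (S:ℝ) ^ d := one_mul _
  calc ∑ x, v x * Real.log (v x / ((S:ℝ) ^ d)⁻¹) ≤ ∑ x, v x * ((d:ℝ) * Real.log S) :=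
        Finset.sum_le_sum (fun x _ => hpt x)
    _ = (d : ℝ) * Real.log S := by rw [← Finset.sum_mul, hv1, one_mul]

end Assemble

/-- Exponential decay of the KL divergence to the uniform distribution along the
forward process: `D_KL(q_t‖π^d) ≤ e^{−t}·D_KL(p_data‖π^d) ≤ e^{−t}·d·log S`. -/
theorem kl_decay (S d : ℕ) (hS : 2 ≤ S) (hd : 1 ≤ d)
    (p : (Fin d → Fin S) → ℝ) (hp : ∀ x, 0 ≤ p x) (hp1 : ∑ x, p x = 1)
    (t : ℝ) (ht : 0 ≤ t) :
    KL S d (qmarg S d p t) (fun _ => ((S : ℝ) ^ d)⁻¹) ≤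
        Real.exp (-t) * KL S d p (fun _ => ((S : ℝ) ^ d)⁻¹) ∧
      Real.exp (-t) * KL S d p (fun _ => ((S : ℝ) ^ d)⁻¹) ≤
        Real.exp (-t) * (d * Real.log S) := by
  have hS0 : 0 < S := by omega
  set l := Real.exp (-t) with hl
  have hl0 : 0 ≤ l := (Real.exp_pos _).le
  have hl1 : l ≤ 1 := by
    rw [hl, ← Real.exp_zero]
    exact Real.exp_le_exp.mpr (by linarith)
  have hK : qmarg S d p t = (Kker S d l).mulVec p := by
    unfold qmarg
    rw [exp_Q hS0 t]
  have hq0 : ∀ x, 0 ≤ qmarg S d p t x := by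
    rw [hK]; exact mulVec_nonneg (Kker_nonneg hl0 hl1) hp
  have hq1 : ∑ x, qmarg S d p t x = 1 := by
    rw [hK, mulVec_mass (Kker_col hS0) p, hp1]
  constructor
  · rw [KL_eq_Fent hS0 _ hq0 hq1, KL_eq_Fent hS0 p hp hp1, hK]
    exact Kker_contract hS0 hl0 hl1 d p hp
  · exact mul_le_mul_of_nonneg_left (KL_le_bound hS0 p hp hp1) hl0


end
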